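/- arXiv:0912.0441 — 2 statements merged into one kernel-verified Lean document; each statement's English description precedes it below -/
import Mathlib

section
/- Vitali's convergence theorem: Let (f_n) be a sequence of functions holomorphic on a domain D ⊆ ℂ, uniformly bounded by some M on D. If f_n(s) converges at every point of a subset S ⊆ D that has a limit point in D, then f_n converges uniformly on every closed disk contained in D to a function holomorphic on D. -/
/-!
Around a point `c` with `closedBall c r` inside the domain, write each `f n` as a Taylor polynomial
plus remainder using iterated difference quotients `dslope`. By the maximum modulus principle the
`k`-th quotient is bounded by `M (2/r)^k` on `closedBall c r`, so on `closedBall c (r/4)` the degree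
`K` remainder is at most `M / 2^K` uniformly in `n`. The same bound makes the `k`-th quotients
uniformly Lipschitz at `c`, so if `c` is an accumulation point of a set where `f n` converges,
induction on `k` shows that every Taylor coefficient at `c` converges; hence `f n` is uniformly
Cauchy near `c`. The set of points near which `f n` is uniformly Cauchy is open, contains `z₀`, and
contains each of its accumulation points in `D`, so by connectedness it contains `D`. The
locally uniform limit is holomorphic by Weierstrass' theorem.
-/

open Filter Topology Metric Finset

theorem uniformCauchySeqOn_of_dist_le_add {ι γ α β : Type*} [PseudoMetricSpace β]
    {p : Filter ι} {l : Filter γ} [l.NeBot] {F : ι → α → β} {s : Set α}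
    (e : γ → ι × ι → ℝ) (δ : γ → ℝ) (he : ∀ᶠ j in l, Tendsto (e j) (p ×ˢ p) (𝓝 0))
    (hδ : Tendsto δ l (𝓝 0))
    (hF : ∀ᶠ j in l, ∀ m n, ∀ x ∈ s, dist (F m x) (F n x) ≤ e j (m, n) + δ j) :
    UniformCauchySeqOn F p s := by
  intro u hu
  obtain ⟨ε, hε, hεu⟩ := Metric.mem_uniformity_dist.1 hu
  obtain ⟨j, hej, hFj, hδj⟩ :=
    (he.and (hF.and (hδ.eventually (gt_mem_nhds (half_pos hε))))).exists
  filter_upwards [hej.eventually (gt_mem_nhds (half_pos hε))] with mn hmn x hx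
  exact hεu ((hFj mn.1 mn.2 x hx).trans_lt (by linarith))

theorem IsPreconnected.subset_of_accPt_mem {X : Type*} [TopologicalSpace X] {D U : Set X}
    (hD : IsPreconnected D) (hU : IsOpen U) (hne : (D ∩ U).Nonempty)
    (h : ∀ z ∈ D, AccPt z (𝓟 U) → z ∈ U) : D ⊆ U := by
  refine hD.subset_of_closure_inter_subset hU hne fun z ⟨hzc, hzD⟩ => ?_
  by_contra hz
  refine hz (h z hzD (accPt_iff_nhds.2 fun V hV => ?_))
  obtain ⟨y, hyV, hyU⟩ := mem_closure_iff_nhds.1 hzc V hV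
  exact ⟨y, ⟨hyV, hyU⟩, fun hyz => hz (hyz ▸ hyU)⟩

theorem tendstoLocallyUniformlyOn_limUnder_of_uniformCauchySeqOn {α β : Type*}
    [TopologicalSpace α] [UniformSpace β] [CompleteSpace β] [Nonempty β]
    {F : ℕ → α → β} {s : Set α}
    (h : ∀ x ∈ s, ∃ t ∈ 𝓝 x, UniformCauchySeqOn F atTop t) :
    TendstoLocallyUniformlyOn F (fun x => limUnder atTop (F · x)) atTop s := by
  refine tendstoLocallyUniformlyOn_iff_filter.2 fun x hx => ?_
  obtain ⟨t, ht, hF⟩ := h x hx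
  have hlim := hF.tendstoUniformlyOn_of_tendsto (f := fun x => limUnder atTop (F · x))
    fun y hy => (hF.cauchySeq hy).tendsto_limUnder
  exact (tendstoUniformlyOn_iff_tendstoUniformlyOnFilter.1 hlim).mono_right
    (nhdsWithin_le_nhds.trans (le_principal_iff.2 ht))

section IteratedDslope

variable {𝕜 E : Type*} [NontriviallyNormedField 𝕜] [NormedAddCommGroup E] [NormedSpace 𝕜 E]

/-- For `f` analytic at `c`, `iteratedDslope f c k c` is the Taylor coefficient `f⁽ᵏ⁾(c) / k!`. -/
noncomputable def iteratedDslope (f : 𝕜 → E) (c : 𝕜) : ℕ → 𝕜 → E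
  | 0 => f
  | k + 1 => dslope (iteratedDslope f c k) c

variable (f : 𝕜 → E) (c : 𝕜)

theorem iteratedDslope_succ (k : ℕ) :
    iteratedDslope f c (k + 1) = dslope (iteratedDslope f c k) c :=
  rfl

theorem iteratedDslope_eq_add_sub_smul (k : ℕ) (z : 𝕜) :
    iteratedDslope f c k z = iteratedDslope f c k c + (z - c) • iteratedDslope f c (k + 1) z := by
  rw [iteratedDslope_succ, sub_smul_dslope, add_sub_cancel]

theorem iteratedDslope_succ_of_ne {z : 𝕜} (hz : z ≠ c) (k : ℕ) :
    iteratedDslope f c (k + 1) z =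
      (z - c)⁻¹ • (iteratedDslope f c k z - iteratedDslope f c k c) := by
  rw [iteratedDslope_succ, dslope_of_ne _ hz, slope_def_module]

theorem taylor_iteratedDslope (K : ℕ) (z : 𝕜) :
    f z = ∑ i ∈ range K, (z - c) ^ i • iteratedDslope f c i c +
      (z - c) ^ K • iteratedDslope f c K z := by
  induction K with
  | zero => simp [iteratedDslope]
  | succ K ih =>
    rw [sum_range_succ, ih, iteratedDslope_eq_add_sub_smul f c K z, smul_add, smul_smul,
      ← pow_succ, add_assoc]

end IteratedDslope

section Complex

variable {E : Type*} [NormedAddCommGroup E] [NormedSpace ℂ E] [CompleteSpace E]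
  {f g : ℂ → E} {c : ℂ} {r M : ℝ}

theorem DifferentiableOn.iteratedDslope {s : Set ℂ} (hs : s ∈ 𝓝 c)
    (hf : DifferentiableOn ℂ f s) (k : ℕ) : DifferentiableOn ℂ (iteratedDslope f c k) s := by
  induction k with
  | zero => exact hf
  | succ k ih => exact (Complex.differentiableOn_dslope hs).2 ih

/-- Each difference quotient costs a factor `2 / r`: on the sphere `‖z - c‖ = r` it is at most
`r⁻¹` times twice the previous bound, and the maximum modulus principle carries this inside. -/
theorem norm_iteratedDslope_le (hr : 0 < r) (hf : DifferentiableOn ℂ f (closedBall c r))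
    (hM : ∀ z ∈ closedBall c r, ‖f z‖ ≤ M) (k : ℕ) :
    ∀ z ∈ closedBall c r, ‖iteratedDslope f c k z‖ ≤ M * (2 / r) ^ k := by
  induction k with
  | zero => simpa [iteratedDslope] using hM
  | succ k ih =>
    intro z hz
    have hd : DiffContOnCl ℂ (iteratedDslope f c (k + 1)) (ball c r) := by
      apply DifferentiableOn.diffContOnCl
      rw [closure_ball c hr.ne']
      exact hf.iteratedDslope (closedBall_mem_nhds c hr) (k + 1)
    refine Complex.norm_le_of_forall_mem_frontier_norm_le isBounded_ball hd (fun w hw => ?_)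
      (by rwa [closure_ball c hr.ne'])
    rw [frontier_ball c hr.ne', mem_sphere_iff_norm] at hw
    have hwc : w ≠ c := by
      rintro rfl
      simp only [sub_self, norm_zero] at hw
      exact hr.ne hw
    have hwr : w ∈ closedBall c r := by rw [mem_closedBall, dist_eq_norm, hw]
    rw [iteratedDslope_succ_of_ne f c hwc, norm_smul, norm_inv, hw]
    calc r⁻¹ * ‖iteratedDslope f c k w - iteratedDslope f c k c‖
        ≤ r⁻¹ * (M * (2 / r) ^ k + M * (2 / r) ^ k) := by
          gcongr
          exact norm_sub_le_of_le (ih w hwr) (ih c (mem_closedBall_self hr.le))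
      _ = M * (2 / r) ^ (k + 1) := by ring

theorem norm_iteratedDslope_sub_le (hr : 0 < r) (hf : DifferentiableOn ℂ f (closedBall c r))
    (hM : ∀ z ∈ closedBall c r, ‖f z‖ ≤ M) (k : ℕ) {z : ℂ} (hz : z ∈ closedBall c r) :
    ‖iteratedDslope f c k z - iteratedDslope f c k c‖ ≤ M * (2 / r) ^ (k + 1) * ‖z - c‖ := by
  rw [iteratedDslope_eq_add_sub_smul f c k z, add_sub_cancel_left, norm_smul, mul_comm]
  gcongr
  exact norm_iteratedDslope_le hr hf hM (k + 1) z hz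

theorem norm_pow_smul_iteratedDslope_le (hr : 0 < r)
    (hf : DifferentiableOn ℂ f (closedBall c r)) (hM : ∀ z ∈ closedBall c r, ‖f z‖ ≤ M)
    (k : ℕ) {z : ℂ} (hz : z ∈ closedBall c (r / 4)) :
    ‖(z - c) ^ k • iteratedDslope f c k z‖ ≤ M * (1 / 2) ^ k := by
  have hzr : z ∈ closedBall c r := closedBall_subset_closedBall (by linarith) hz
  rw [mem_closedBall, dist_eq_norm] at hz
  calc ‖(z - c) ^ k • iteratedDslope f c k z‖
      ≤ (r / 4) ^ k * (M * (2 / r) ^ k) := by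
        rw [norm_smul, norm_pow]
        exact mul_le_mul (by gcongr) (norm_iteratedDslope_le hr hf hM k z hzr) (norm_nonneg _)
          (by positivity)
    _ = M * (1 / 2) ^ k := by
        rw [mul_left_comm, ← mul_pow]
        congr 2
        field_simp
        ring

theorem dist_le_sum_dist_iteratedDslope_add (hr : 0 < r)
    (hf : DifferentiableOn ℂ f (closedBall c r)) (hfM : ∀ z ∈ closedBall c r, ‖f z‖ ≤ M)
    (hg : DifferentiableOn ℂ g (closedBall c r)) (hgM : ∀ z ∈ closedBall c r, ‖g z‖ ≤ M)
    (K : ℕ) {z : ℂ} (hz : z ∈ closedBall c (r / 4)) :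
    dist (f z) (g z) ≤ ∑ i ∈ range K,
        (r / 4) ^ i * dist (iteratedDslope f c i c) (iteratedDslope g c i c) +
      2 * M * (1 / 2) ^ K := by
  have hzc : ‖z - c‖ ≤ r / 4 := by rwa [mem_closedBall, dist_eq_norm] at hz
  rw [dist_eq_norm, taylor_iteratedDslope f c K z, taylor_iteratedDslope g c K z]
  calc _ = ‖∑ i ∈ range K, (z - c) ^ i • (iteratedDslope f c i c - iteratedDslope g c i c) +
          ((z - c) ^ K • iteratedDslope f c K z - (z - c) ^ K • iteratedDslope g c K z)‖ := by
        simp only [smul_sub, sum_sub_distrib]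
        abel_nf
    _ ≤ ∑ i ∈ range K, ‖(z - c) ^ i • (iteratedDslope f c i c - iteratedDslope g c i c)‖ +
          (‖(z - c) ^ K • iteratedDslope f c K z‖ + ‖(z - c) ^ K • iteratedDslope g c K z‖) :=
        norm_add_le_of_le (norm_sum_le _ _) (norm_sub_le _ _)
    _ ≤ _ := by
        rw [two_mul, add_mul]
        gcongr with i
        · rw [norm_smul, norm_pow, dist_eq_norm]
          gcongr
        · exact norm_pow_smul_iteratedDslope_le hr hf hfM K hz
        · exact norm_pow_smul_iteratedDslope_le hr hg hgM K hz

variable {f : ℕ → ℂ → E} {S : Set ℂ}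

/-- The `k`-th quotients are Lipschitz at `c` uniformly in `n`, so their values at points of `S`
near `c` approximate their values at `c` uniformly in `n`. -/
theorem cauchySeq_iteratedDslope_center_of_forall_ne (hr : 0 < r)
    (hf : ∀ n, DifferentiableOn ℂ (f n) (closedBall c r))
    (hM : ∀ n, ∀ z ∈ closedBall c r, ‖f n z‖ ≤ M) (hacc : AccPt c (𝓟 S)) (k : ℕ)
    (hS : ∀ s ∈ S, s ≠ c → CauchySeq fun n => iteratedDslope (f n) c k s) :
    CauchySeq fun n => iteratedDslope (f n) c k c := by
  have := accPt_principal_iff_nhdsWithin.1 hacc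
  refine UniformCauchySeqOn.cauchySeq (s := {c}) ?_ rfl
  refine uniformCauchySeqOn_of_dist_le_add (l := 𝓝[S \ {c}] c)
    (fun s mn => dist (iteratedDslope (f mn.1) c k s) (iteratedDslope (f mn.2) c k s))
    (fun s => 2 * (M * (2 / r) ^ (k + 1) * ‖s - c‖)) ?_ ?_ ?_
  · filter_upwards [self_mem_nhdsWithin] with s ⟨hsS, hsc⟩
    rw [prod_atTop_atTop_eq]
    exact cauchySeq_iff_tendsto_dist_atTop_0.1 (hS s hsS hsc)
  · simpa using (((tendsto_norm_sub_self c).mono_left nhdsWithin_le_nhds).const_mul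
      (M * (2 / r) ^ (k + 1))).const_mul 2
  · filter_upwards [mem_nhdsWithin_of_mem_nhds (closedBall_mem_nhds c hr)] with s hs m n z hz
    rw [Set.mem_singleton_iff.1 hz]
    have hm := norm_iteratedDslope_sub_le hr (hf m) (hM m) k hs
    have hn := norm_iteratedDslope_sub_le hr (hf n) (hM n) k hs
    rw [← dist_eq_norm] at hm hn
    rw [dist_comm] at hm
    linarith [dist_triangle4 (iteratedDslope (f m) c k c) (iteratedDslope (f m) c k s)
      (iteratedDslope (f n) c k s) (iteratedDslope (f n) c k c)]

theorem cauchySeq_iteratedDslope_center (hr : 0 < r)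
    (hf : ∀ n, DifferentiableOn ℂ (f n) (closedBall c r))
    (hM : ∀ n, ∀ z ∈ closedBall c r, ‖f n z‖ ≤ M) (hacc : AccPt c (𝓟 S))
    (hconv : ∀ s ∈ S, CauchySeq fun n => f n s) (k : ℕ) :
    CauchySeq fun n => iteratedDslope (f n) c k c := by
  suffices ∀ k, ∀ s ∈ S, s ≠ c → CauchySeq fun n => iteratedDslope (f n) c k s from
    cauchySeq_iteratedDslope_center_of_forall_ne hr hf hM hacc k (this k)
  intro k
  induction k with
  | zero => exact fun s hs _ => hconv s hs
  | succ k ih =>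
    intro s hs hsc
    simp_rw [iteratedDslope_succ_of_ne _ c hsc]
    have hc := cauchySeq_iteratedDslope_center_of_forall_ne hr hf hM hacc k ih
    exact (uniformContinuous_const_smul _).comp_cauchySeq
      (uniformContinuous_sub.comp_cauchySeq ((ih s hs hsc).prodMk hc))

theorem uniformCauchySeqOn_closedBall_of_accPt (hr : 0 < r)
    (hf : ∀ n, DifferentiableOn ℂ (f n) (closedBall c r))
    (hM : ∀ n, ∀ z ∈ closedBall c r, ‖f n z‖ ≤ M) (hacc : AccPt c (𝓟 S))
    (hconv : ∀ s ∈ S, CauchySeq fun n => f n s) :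
    UniformCauchySeqOn f atTop (closedBall c (r / 4)) := by
  have hcoeff := cauchySeq_iteratedDslope_center hr hf hM hacc hconv
  refine uniformCauchySeqOn_of_dist_le_add (l := atTop)
    (fun K mn => ∑ i ∈ range K,
      (r / 4) ^ i * dist (iteratedDslope (f mn.1) c i c) (iteratedDslope (f mn.2) c i c))
    (fun K => 2 * M * (1 / 2) ^ K) (Eventually.of_forall fun K => ?_) ?_
    (Eventually.of_forall fun K m n z hz =>
      dist_le_sum_dist_iteratedDslope_add hr (hf m) (hM m) (hf n) (hM n) K hz)
  · rw [prod_atTop_atTop_eq]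
    simpa using tendsto_finsetSum (range K) fun i _ =>
      (cauchySeq_iff_tendsto_dist_atTop_0.1 (hcoeff i)).const_mul ((r / 4) ^ i)
  · simpa using (tendsto_pow_atTop_nhds_zero_of_lt_one (by norm_num : (0 : ℝ) ≤ 1 / 2)
      (by norm_num)).const_mul (2 * M)

end Complex

theorem vitali_convergence_general
    (D : Set ℂ) (hD : IsOpen D) (hDconn : IsConnected D)
    (f : ℕ → ℂ → ℂ) (M : ℝ)
    (hf : ∀ n, DifferentiableOn ℂ (f n) D)
    (hbd : ∀ n, ∀ s ∈ D, ‖f n s‖ ≤ M)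
    (S : Set ℂ)
    (z₀ : ℂ) (hz₀ : z₀ ∈ D) (hacc : AccPt z₀ (Filter.principal S))
    (hconv : ∀ s ∈ S, ∃ l : ℂ, Tendsto (fun n => f n s) atTop (𝓝 l)) :
    ∃ g : ℂ → ℂ, DifferentiableOn ℂ g D ∧
      ∀ (c : ℂ) (r : ℝ), Metric.closedBall c r ⊆ D →
        TendstoUniformlyOn f g atTop (Metric.closedBall c r) := by
  set U := {z | ∃ t ∈ 𝓝 z, UniformCauchySeqOn f atTop t}
  have hU : IsOpen U := isOpen_iff_mem_nhds.2 fun z ⟨t, ht, hft⟩ =>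
    (eventually_mem_nhds_iff.2 ht).mono fun y hy => ⟨t, hy, hft⟩
  have hlocal : ∀ z ∈ D, ∀ T : Set ℂ, AccPt z (𝓟 T) →
      (∀ s ∈ T, CauchySeq fun n => f n s) → z ∈ U := by
    intro z hz T hzT hT
    obtain ⟨r, hr, hrD⟩ := nhds_basis_closedBall.mem_iff.1 (hD.mem_nhds hz)
    exact ⟨_, closedBall_mem_nhds z (by positivity), uniformCauchySeqOn_closedBall_of_accPt hr
      (fun n => (hf n).mono hrD) (fun n w hw => hbd n w (hrD hw)) hzT hT⟩
  have hDU : D ⊆ U := by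
    refine hDconn.isPreconnected.subset_of_accPt_mem hU ⟨z₀, hz₀, ?_⟩
      fun z hz hzU => hlocal z hz U hzU fun s ⟨t, ht, hft⟩ => hft.cauchySeq (mem_of_mem_nhds ht)
    exact hlocal z₀ hz₀ S hacc fun s hs => (hconv s hs).choose_spec.cauchySeq
  have hlim := tendstoLocallyUniformlyOn_limUnder_of_uniformCauchySeqOn fun z hz => hDU hz
  exact ⟨_, hlim.differentiableOn (Eventually.of_forall hf) hD, fun c r hcr =>
    (tendstoLocallyUniformlyOn_iff_forall_isCompact hD).1 hlim _ hcr (isCompact_closedBall c r)⟩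

/-- **Vitali's convergence theorem.** -/
theorem vitali_convergence
    (D : Set ℂ) (hD : IsOpen D) (hDconn : IsConnected D)
    (f : ℕ → ℂ → ℂ) (M : ℝ)
    (hf : ∀ n, DifferentiableOn ℂ (f n) D)
    (hbd : ∀ n, ∀ s ∈ D, ‖f n s‖ ≤ M)
    (S : Set ℂ) (hSD : S ⊆ D)
    (z₀ : ℂ) (hz₀ : z₀ ∈ D) (hacc : AccPt z₀ (Filter.principal S))
    (hconv : ∀ s ∈ S, ∃ l : ℂ, Tendsto (fun n => f n s) atTop (𝓝 l)) :
    ∃ g : ℂ → ℂ, DifferentiableOn ℂ g D ∧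
      ∀ (c : ℂ) (r : ℝ), Metric.closedBall c r ⊆ D →
        TendstoUniformlyOn f g atTop (Metric.closedBall c r) :=
  vitali_convergence_general D hD hDconn f M hf hbd S z₀ hz₀ hacc hconv
end

section
/- For a sequence of number fields K_i with g_{K_i} → ∞ such that for every prime power q the limit φ_q = lim Φ_q(K_i)/g_{K_i} exists, and for Re s > 1, the limit lim_{i→∞} (log ζ_{K_i}(s))/g_{K_i} exists and equals Σ_q φ_q log(1 - q^{-s})^{-1} = log Π_q (1 - q^{-s})^{-φ_q}, where the sum converges absolutely. -/
open Filter Topology NumberField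

/-- `Φ_q(K)`: the number of prime ideals of `𝒪_K` of norm exactly `q`. -/
noncomputable def PhiQ (K : Type*) [Field K] [NumberField K] (q : ℕ) : ℕ :=
  Nat.card {P : Ideal (𝓞 K) // P.IsPrime ∧ Ideal.absNorm P = q}

/-- `g_K = log √|D_K|`, the genus of the number field `K`. -/
noncomputable def genusNF (K : Type*) [Field K] [NumberField K] : ℝ :=
  Real.log (Real.sqrt |(NumberField.discr K : ℝ)|)

/-- The principal branch of the logarithm of the Euler product:
`log ζ_K(s) = ∑_𝔭 ∑_{m ≥ 1} N𝔭^{-ms}/m`. -/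
noncomputable def logDedekindZeta (K : Type*) [Field K] [NumberField K] (s : ℂ) : ℂ :=
  ∑' (P : {P : Ideal (𝓞 K) // P.IsPrime ∧ P ≠ ⊥}) (m : ℕ),
    (Ideal.absNorm P.1 : ℂ) ^ (-((m : ℂ) + 1) * s) / ((m : ℂ) + 1)


/-!
Grouping the prime ideals by their norm `q` turns the Euler-product logarithm into
`log ζ_K(s) = ∑_q Φ_q(K) · (-log (1 - q^{-s}))`. A prime of norm `q` divides `(q)`, whose norm is
`q^[K:ℚ]`, so `Φ_q(K) ≤ [K:ℚ]`; Minkowski's bound gives `[K:ℚ] ≤ 3 g_K + 2`. Hence the coefficients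
`Φ_q(K_i)/g_{K_i}` are eventually bounded by `5` uniformly in `q`, while
`‖log (1 - q^{-s})‖ ≤ (3/2) q^{-Re s}` is summable, and Tannery's theorem lets the limit pass
inside the sum.
-/

section Summation

variable {α β E : Type*}

theorem tsum_fiber_comp [AddCommGroup E] [TopologicalSpace E] [IsTopologicalAddGroup E]
    [T2Space E] (f : α → β) (g : β → E) (b : β) :
    ∑' a : f ⁻¹' {b}, g (f a) = Nat.card (f ⁻¹' {b}) • g b := by
  rw [tsum_congr fun a : f ⁻¹' {b} => congrArg g a.2, tsum_const]

theorem hasSum_natCard_fiber_nsmul [NormedAddCommGroup E] [CompleteSpace E] {f : α → β}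
    {g : β → E} (hfin : ∀ b, (f ⁻¹' {b}).Finite)
    (hsum : Summable fun b => Nat.card (f ⁻¹' {b}) * ‖g b‖) :
    HasSum (fun b => Nat.card (f ⁻¹' {b}) • g b) (∑' a, g (f a)) := by
  have hnorm : Summable fun a => ‖g (f a)‖ := by
    refine (summable_partition (fun a => norm_nonneg (g (f a))) (s := fun b => f ⁻¹' {b})
      fun a => ⟨f a, rfl, fun b hb => hb.symm⟩).2 ⟨fun b => ?_, ?_⟩
    · have := (hfin b).to_subtype
      exact Summable.of_finite
    · simpa only [tsum_fiber_comp f (‖g ·‖), nsmul_eq_mul] using hsum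
  simpa only [tsum_fiber_comp] using hnorm.of_norm.hasSum.tsum_fiberwise f

theorem summable_norm_of_tendsto_of_norm_le [NormedAddCommGroup E] {ι : Type*} {l : Filter ι}
    [l.NeBot] {F : ι → β → E} {f : β → E} {bound : β → ℝ} (hbound : Summable bound)
    (hF : ∀ b, Tendsto (F · b) l (𝓝 (f b))) (hle : ∀ᶠ i in l, ∀ b, ‖F i b‖ ≤ bound b) :
    Summable fun b => ‖f b‖ :=
  hbound.of_nonneg_of_le (fun _ => norm_nonneg _) fun b =>
    le_of_tendsto (tendsto_norm.comp (hF b)) (hle.mono fun _ h => h b)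

end Summation

section EulerFactor

variable {s : ℂ}

theorem hasSum_natCast_cpow_div_eq_neg_log {n : ℕ} (hn : 1 < n) (hs : 0 < s.re) :
    HasSum (fun m : ℕ => (n : ℂ) ^ (-((m : ℂ) + 1) * s) / ((m : ℂ) + 1))
      (-Complex.log (1 - (n : ℂ) ^ (-s))) := by
  have hlt : ‖(n : ℂ) ^ (-s)‖ < 1 := by
    rw [Complex.norm_natCast_cpow_of_pos (by omega), Complex.neg_re]
    exact Real.rpow_lt_one_of_one_lt_of_neg (by exact_mod_cast hn) (by linarith)
  convert Complex.hasSum_taylorSeries_neg_log' hlt using 2 with m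
  rw [← Complex.cpow_mul_nat]
  push_cast
  ring_nf

theorem norm_log_one_sub_natCast_cpow_le {q : ℕ} (hq : 2 ≤ q) (hs : 1 ≤ s.re) :
    ‖Complex.log (1 - (q : ℂ) ^ (-s))‖ ≤ 3 / 2 * (q : ℝ) ^ (-s.re) := by
  have hnorm : ‖(q : ℂ) ^ (-s)‖ = (q : ℝ) ^ (-s.re) := by
    rw [Complex.norm_natCast_cpow_of_pos (by omega), Complex.neg_re]
  have hhalf : (q : ℝ) ^ (-s.re) ≤ 1 / 2 := calc
    (q : ℝ) ^ (-s.re) ≤ (q : ℝ) ^ (-1 : ℝ) :=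
      Real.rpow_le_rpow_of_exponent_le (by norm_cast; omega) (by linarith)
    _ ≤ 1 / 2 := by
      rw [Real.rpow_neg_one, one_div]
      exact inv_anti₀ two_pos (by exact_mod_cast hq)
  rw [← hnorm, sub_eq_add_neg, ← norm_neg ((q : ℂ) ^ (-s))]
  exact Complex.norm_log_one_add_half_le_self (by rwa [norm_neg, hnorm])

theorem summable_norm_log_one_sub_natCast_cpow (hs : 1 < s.re) :
    Summable fun q : ℕ => ‖Complex.log (1 - (q : ℂ) ^ (-s))‖ := by
  refine (summable_nat_add_iff 2).mp <|
    Summable.of_nonneg_of_le (fun _ => norm_nonneg _)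
      (fun q => norm_log_one_sub_natCast_cpow_le (q := q + 2) (by omega) hs.le) ?_
  exact (summable_nat_add_iff 2).mpr ((Real.summable_nat_rpow.mpr (by linarith)).mul_left _)

end EulerFactor

theorem Ideal.ne_bot_of_absNorm_eq {S : Type*} [CommRing S] [IsDedekindDomain S]
    [Module.Free ℤ S] {P : Ideal S} {q : ℕ} (hP : Ideal.absNorm P = q) (hq : q ≠ 0) : P ≠ ⊥ := by
  rintro rfl
  simp_all

theorem Ideal.isPrimePow_absNorm_of_isPrime {S : Type*} [CommRing S] [IsDedekindDomain S]
    [Module.Free ℤ S] [Module.Finite ℤ S] {P : Ideal S} (hP : P.IsPrime) (hP0 : P ≠ ⊥) :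
    IsPrimePow (Ideal.absNorm P) := by
  have := hP.isMaximal hP0
  obtain ⟨p, n, hn, -, hp, hPn⟩ := Ideal.exists_prime_and_absNorm_eq_pow P
  exact ⟨p, n, hp.prime, hn, hPn.symm⟩

section NumberField

variable {K : Type*} [Field K] [NumberField K]

theorem PhiQ_eq_zero_of_not_isPrimePow {q : ℕ} (hq0 : q ≠ 0) (hq : ¬IsPrimePow q) :
    PhiQ K q = 0 := by
  refine Nat.card_eq_zero.mpr (.inl ⟨fun P => hq ?_⟩)
  rw [← P.2.2]
  exact Ideal.isPrimePow_absNorm_of_isPrime P.2.1 (Ideal.ne_bot_of_absNorm_eq P.2.2 hq0)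

theorem PhiQ_le_finrank {q : ℕ} (hq0 : q ≠ 0) : PhiQ K q ≤ Module.finrank ℚ K := by
  classical
  by_cases hq : IsPrimePow q
  case neg => simp [PhiQ_eq_zero_of_not_isPrimePow hq0 hq]
  have hfin : {P : Ideal (𝓞 K) | P.IsPrime ∧ Ideal.absNorm P = q}.Finite :=
    (Ideal.finite_setOfPred_absNorm_eq q).subset fun P hP => hP.2
  set T := hfin.toFinset
  have hT : PhiQ K q = T.card := by
    rw [PhiQ, ← Set.ncard_eq_toFinset_card _ hfin, ← Nat.card_coe_set_eq]
    rfl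
  have hmem : ∀ P ∈ T, P.IsPrime ∧ Ideal.absNorm P = q := fun P hP => hfin.mem_toFinset.mp hP
  have hprod : ∏ P ∈ T, P ∣ Ideal.span {(q : 𝓞 K)} := by
    refine T.prod_primes_dvd _ (fun P hP => ?_) fun P hP => ?_
    · exact (Ideal.prime_iff_isPrime (Ideal.ne_bot_of_absNorm_eq (hmem P hP).2 hq0)).mpr
        (hmem P hP).1
    · rw [Ideal.dvd_iff_le, Ideal.span_le, Set.singleton_subset_iff, ← (hmem P hP).2]
      exact Ideal.absNorm_mem P
  have hpow : q ^ T.card ∣ q ^ Module.finrank ℚ K := by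
    have := map_dvd Ideal.absNorm hprod
    rwa [map_prod, Finset.prod_congr rfl fun P hP => (hmem P hP).2, Finset.prod_const,
      Ideal.absNorm_span_natCast, RingOfIntegers.rank] at this
  rw [hT]
  exact (Nat.pow_dvd_pow_iff_le_right hq.one_lt).mp hpow

theorem finrank_le_three_mul_genusNF_add_two :
    (Module.finrank ℚ K : ℝ) ≤ 3 * genusNF K + 2 := by
  have hg : genusNF K = Real.log |(discr K : ℝ)| / 2 := by
    rw [genusNF, Real.log_sqrt (abs_nonneg _)]
  have hD : (1 : ℝ) ≤ |(discr K : ℝ)| := by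
    rw [← Int.cast_abs]
    exact_mod_cast Int.one_le_abs (discr_ne_zero K)
  rcases le_or_gt (Module.finrank ℚ K) 1 with h1 | h1
  · have : (Module.finrank ℚ K : ℝ) ≤ 1 := by exact_mod_cast h1
    have : 0 ≤ genusNF K := hg ▸ div_nonneg (Real.log_nonneg hD) two_pos.le
    linarith
  have hmink : (2 : ℝ) ^ Module.finrank ℚ K ≤ 2 ^ 2 * |(discr K : ℝ)| := calc
    (2 : ℝ) ^ Module.finrank ℚ K ≤ (3 * Real.pi / 4) ^ Module.finrank ℚ K :=
      pow_le_pow_left₀ two_pos.le (by linarith [Real.pi_gt_three]) _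
    _ ≤ 2 ^ 2 * (4 / 9 * (3 * Real.pi / 4) ^ Module.finrank ℚ K) := by
      nlinarith [pow_pos (by positivity : (0 : ℝ) < 3 * Real.pi / 4) (Module.finrank ℚ K)]
    _ ≤ 2 ^ 2 * |(discr K : ℝ)| := by
      grw [abs_discr_ge h1, Int.cast_abs]
  have hlog := Real.log_le_log (by positivity) hmink
  rw [Real.log_mul (by positivity) (by positivity), Real.log_pow, Real.log_pow] at hlog
  have hn : (2 : ℝ) ≤ Module.finrank ℚ K := by exact_mod_cast h1
  push_cast at hlog
  rw [hg]
  nlinarith [mul_nonneg (sub_nonneg.mpr hn) (sub_nonneg.mpr Real.log_two_gt_d9.le)]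

theorem PhiQ_le_five_mul_genusNF (hg : 1 ≤ genusNF K) {q : ℕ} (hq0 : q ≠ 0) :
    (PhiQ K q : ℝ) ≤ 5 * genusNF K :=
  calc (PhiQ K q : ℝ) ≤ Module.finrank ℚ K := by exact_mod_cast PhiQ_le_finrank hq0
    _ ≤ 3 * genusNF K + 2 := finrank_le_three_mul_genusNF_add_two
    _ ≤ 5 * genusNF K := by linarith

end NumberField

theorem hasSum_logDedekindZeta (K : Type*) [Field K] [NumberField K] {s : ℂ} (hs : 1 < s.re) :
    HasSum (fun q : ℕ => (PhiQ K q : ℂ) * -Complex.log (1 - (q : ℂ) ^ (-s)))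
      (logDedekindZeta K s) := by
  let N : {P : Ideal (𝓞 K) // P.IsPrime ∧ P ≠ ⊥} → ℕ := fun P => Ideal.absNorm P.1
  have hζ : logDedekindZeta K s = ∑' P, -Complex.log (1 - (N P : ℂ) ^ (-s)) :=
    tsum_congr fun P => (hasSum_natCast_cpow_div_eq_neg_log
      (Ideal.isPrimePow_absNorm_of_isPrime P.2.1 P.2.2).one_lt (by linarith)).tsum_eq
  have hfin : ∀ q, (N ⁻¹' {q}).Finite := fun q =>
    Set.Finite.preimage (f := Subtype.val) Subtype.val_injective.injOn
      (Ideal.finite_setOfPred_absNorm_eq q)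
  have hcard : ∀ q ≠ 0, Nat.card (N ⁻¹' {q}) = PhiQ K q := fun q hq => Nat.card_congr
    { toFun := fun P => ⟨P.1.1, P.1.2.1, P.2⟩
      invFun := fun P => ⟨⟨P.1, P.2.1, Ideal.ne_bot_of_absNorm_eq P.2.2 hq⟩, P.2.2⟩ }
  -- `PhiQ K 0 = 1` counts `⊥`, which `logDedekindZeta` omits; the `q = 0` factor vanishes anyway.
  have hs0 : (0 : ℂ) ^ (-s) = 0 :=
    Complex.zero_cpow (neg_ne_zero.mpr (Complex.ne_zero_of_one_lt_re hs))
  have hsum : Summable fun q => Nat.card (N ⁻¹' {q}) * ‖-Complex.log (1 - (q : ℂ) ^ (-s))‖ := by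
    refine Summable.of_nonneg_of_le (fun _ => by positivity) (fun q => ?_)
      ((summable_norm_log_one_sub_natCast_cpow hs).mul_left (Module.finrank ℚ K : ℝ))
    rcases eq_or_ne q 0 with rfl | hq
    · simp [hs0]
    rw [hcard q hq, norm_neg]
    gcongr
    exact_mod_cast PhiQ_le_finrank hq
  rw [hζ]
  refine (hasSum_natCard_fiber_nsmul hfin hsum).congr_fun fun q => ?_
  rcases eq_or_ne q 0 with rfl | hq
  · simp [hs0]
  rw [hcard q hq, nsmul_eq_mul]

/-- For an asymptotically exact family of number fields and `Re s > 1`,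
`(log ζ_{K_i}(s))/g_{K_i}` converges to
`∑_q φ_q log (1-q^{-s})^{-1} = log ∏_q (1-q^{-s})^{-φ_q}`,
the sum being absolutely convergent. -/
theorem log_zeta_limit_re_gt_one
    (K : ℕ → Type) [∀ i, Field (K i)] [∀ i, NumberField (K i)]
    (hg : Tendsto (fun i => genusNF (K i)) atTop atTop)
    (φ : ℕ → ℝ) (hφ0 : ∀ q, ¬ IsPrimePow q → φ q = 0)
    (hφ : ∀ q, IsPrimePow q →
      Tendsto (fun i => (PhiQ (K i) q : ℝ) / genusNF (K i)) atTop (𝓝 (φ q))) :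
    ∀ s : ℂ, 1 < s.re →
      Summable (fun q : ℕ => ‖(φ q : ℂ) * Complex.log (1 - (q : ℂ) ^ (-s))‖) ∧
      Tendsto (fun i => logDedekindZeta (K i) s / (genusNF (K i) : ℂ)) atTop
        (𝓝 (∑' q : ℕ, (φ q : ℂ) * (-Complex.log (1 - (q : ℂ) ^ (-s))))) := by
  intro s hs
  have hs0 : (0 : ℂ) ^ (-s) = 0 :=
    Complex.zero_cpow (neg_ne_zero.mpr (Complex.ne_zero_of_one_lt_re hs))
  have hlim : ∀ q, Tendsto (fun i => ((PhiQ (K i) q / genusNF (K i) : ℝ) : ℂ) *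
      -Complex.log (1 - (q : ℂ) ^ (-s))) atTop
      (𝓝 ((φ q : ℂ) * -Complex.log (1 - (q : ℂ) ^ (-s)))) := by
    intro q
    rcases eq_or_ne q 0 with rfl | hq0
    · simp [hs0]
    by_cases hq : IsPrimePow q
    · exact ((Complex.continuous_ofReal.tendsto _).comp (hφ q hq)).mul_const _
    · simp [PhiQ_eq_zero_of_not_isPrimePow hq0 hq, hφ0 q hq]
  have hle : ∀ᶠ i in atTop, ∀ q, ‖((PhiQ (K i) q / genusNF (K i) : ℝ) : ℂ) *
      -Complex.log (1 - (q : ℂ) ^ (-s))‖ ≤ 5 * ‖Complex.log (1 - (q : ℂ) ^ (-s))‖ := by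
    filter_upwards [hg.eventually_ge_atTop 1] with i hi q
    rcases eq_or_ne q 0 with rfl | hq0
    · simp [hs0]
    rw [norm_mul, norm_neg, Complex.norm_real, Real.norm_of_nonneg (by positivity)]
    gcongr
    exact (div_le_iff₀ (by linarith)).mpr (PhiQ_le_five_mul_genusNF hi hq0)
  have hbound := (summable_norm_log_one_sub_natCast_cpow hs).mul_left 5
  refine ⟨?_, ?_⟩
  · simpa only [mul_neg, norm_neg] using summable_norm_of_tendsto_of_norm_le hbound hlim hle
  · convert tendsto_tsum_of_dominated_convergence hbound hlim hle using 2 with i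
    rw [← ((hasSum_logDedekindZeta (K i) hs).div_const _).tsum_eq]
    exact tsum_congr fun q => by push_cast; ring
end
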